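/- arXiv:1804.05694 — 2 statements merged into one kernel-verified Lean document; each statement's English description precedes it below -/
import Mathlib

section
/- Let X be a standard Fréchet random variable, η ∈ ℝ, τ > 0, ξ ≠ 0, and β a positive integer with βξ < 1/2. Set Z = (η − τ/ξ) + (τ/ξ) X^ξ. Then Var(Z^β) = Σ_{k1=0}^{β} Σ_{k2=0}^{β} B_{k1,k2,β,η,τ,ξ} [ Γ(1 − ξ(2β − k1 − k2)) − Γ(1 − (β−k1)ξ) Γ(1 − (β−k2)ξ) ], where B_{k1,k2,β,η,τ,ξ} = binom(β,k1) binom(β,k2) (η − τ/ξ)^{k1+k2} (τ/ξ)^{2β−(k1+k2)}. -/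
/-! If `T` has the unit exponential law then `T⁻¹` is standard Fréchet, so a standard Fréchet `X`
has the moments `E[X^s] = ∫₀^∞ t^(-s) e^(-t) dt = Γ(1 - s)` for `s < 1`. The binomial theorem
writes `Z^β` as a linear combination of the powers `X^((β - k) ξ)`, `0 ≤ k ≤ β`, which are square
integrable because `βξ < 1/2`. Bilinearity of the covariance then reduces `Var(Z^β)` to the
covariances `Cov(X^s, X^t) = Γ(1 - (s + t)) - Γ(1 - s) Γ(1 - t)`. -/

open MeasureTheory

def IsStdFrechet {Ω : Type*} [MeasurableSpace Ω] (P : Measure Ω) (X : Ω → ℝ) : Prop :=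
  ∀ x : ℝ, P {ω | X ω ≤ x} = if 0 < x then ENNReal.ofReal (Real.exp (-1 / x)) else 0

open Real Set ProbabilityTheory

lemma expMeasure_one_eq_withDensity :
    expMeasure 1 = (volume.restrict (Ioi 0)).withDensity fun t => ENNReal.ofReal (exp (-t)) := by
  rw [← withDensity_indicator measurableSet_Ioi, expMeasure, gammaMeasure]
  refine withDensity_congr_ae ?_
  filter_upwards [volume.ae_ne 0] with t ht
  rcases ht.lt_or_gt with h | h
  · simp [gammaPDF, gammaPDFReal, h.not_ge, h.not_gt]
  · simp [gammaPDF, gammaPDFReal, h.le, h]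

lemma ae_pos_expMeasure_one : ∀ᵐ t ∂expMeasure 1, 0 < t := by
  rw [expMeasure_one_eq_withDensity]
  exact withDensity_absolutelyContinuous _ _ (ae_restrict_mem measurableSet_Ioi)

lemma expMeasure_one_Ici {c : ℝ} (hc : 0 < c) :
    expMeasure 1 (Ici c) = ENNReal.ofReal (exp (-c)) := by
  rw [expMeasure_one_eq_withDensity, withDensity_apply _ measurableSet_Ici,
    Measure.restrict_restrict measurableSet_Ici, inter_eq_left.mpr (Ici_subset_Ioi.mpr hc),
    ← restrict_Ioi_eq_restrict_Ici, ← ofReal_integral_eq_lintegral_ofReal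
      (integrableOn_exp_neg_Ioi c) (ae_of_all _ fun t => (exp_pos _).le), integral_exp_neg_Ioi]

lemma isStdFrechet_inv_expMeasure_one : IsStdFrechet (expMeasure 1) fun t => t⁻¹ := by
  intro x
  split_ifs with hx
  · rw [neg_div, one_div, ← expMeasure_one_Ici (inv_pos.mpr hx)]
    refine measure_congr ?_
    filter_upwards [ae_pos_expMeasure_one] with t ht
    exact propext (inv_le_comm₀ ht hx)
  · rw [measure_eq_zero_iff_ae_notMem]
    filter_upwards [ae_pos_expMeasure_one] with t ht
    exact fun h => hx ((inv_pos.mpr ht).trans_le h)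

lemma integrable_expMeasure_one_iff {g : ℝ → ℝ} :
    Integrable g (expMeasure 1) ↔ IntegrableOn (fun t => exp (-t) * g t) (Ioi 0) := by
  have h := integrable_withDensity_iff_integrable_smul (μ := volume.restrict (Ioi 0))
    (by fun_prop : Measurable fun t : ℝ => exp (-t)).real_toNNReal (g := g)
  simp only [NNReal.smul_def, coe_toNNReal _ (exp_pos _).le, smul_eq_mul] at h
  rw [expMeasure_one_eq_withDensity]
  exact h

lemma integral_expMeasure_one (g : ℝ → ℝ) :
    ∫ t, g t ∂expMeasure 1 = ∫ t in Ioi 0, exp (-t) * g t := by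
  have h := integral_withDensity_eq_integral_smul (μ := volume.restrict (Ioi 0))
    (by fun_prop : Measurable fun t : ℝ => exp (-t)).real_toNNReal g
  simp only [NNReal.smul_def, coe_toNNReal _ (exp_pos _).le, smul_eq_mul] at h
  rw [expMeasure_one_eq_withDensity]
  exact h

-- The right-hand side is the integrand of `Real.Gamma_eq_integral` at `1 - s`.
lemma exp_neg_mul_inv_rpow {t : ℝ} (ht : 0 < t) (s : ℝ) :
    exp (-t) * t⁻¹ ^ s = exp (-t) * t ^ ((1 - s) - 1) := by
  rw [inv_rpow ht.le, ← rpow_neg ht.le, sub_sub_cancel_left]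

lemma integrable_inv_rpow_expMeasure_one {s : ℝ} (hs : s < 1) :
    Integrable (fun t => t⁻¹ ^ s) (expMeasure 1) := by
  rw [integrable_expMeasure_one_iff]
  exact (GammaIntegral_convergent (sub_pos.mpr hs)).congr_fun
    (fun t ht => (exp_neg_mul_inv_rpow ht s).symm) measurableSet_Ioi

lemma integral_inv_rpow_expMeasure_one {s : ℝ} (hs : s < 1) :
    ∫ t, t⁻¹ ^ s ∂expMeasure 1 = Gamma (1 - s) := by
  rw [integral_expMeasure_one, Gamma_eq_integral (sub_pos.mpr hs)]
  exact setIntegral_congr_fun measurableSet_Ioi fun t ht => exp_neg_mul_inv_rpow ht s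

namespace IsStdFrechet

variable {Ω : Type*} [MeasurableSpace Ω] {P : Measure Ω} {X : Ω → ℝ}

lemma ae_pos (hF : IsStdFrechet P X) : ∀ᵐ ω ∂P, 0 < X ω := by
  have h := hF 0
  rw [if_neg (lt_irrefl 0)] at h
  simpa [ae_iff, not_lt] using h

lemma map_eq {Ω' : Type*} [MeasurableSpace Ω'] {Q : Measure Ω'} {Y : Ω' → ℝ}
    [IsFiniteMeasure P] [IsFiniteMeasure Q] (hX : Measurable X) (hY : Measurable Y)
    (hF : IsStdFrechet P X) (hG : IsStdFrechet Q Y) : P.map X = Q.map Y :=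
  Measure.ext_of_Iic _ _ fun x => by
    rw [Measure.map_apply hX measurableSet_Iic, Measure.map_apply hY measurableSet_Iic]
    exact (hF x).trans (hG x).symm

section Moments

variable [IsFiniteMeasure P]

lemma map_eq_map_inv_expMeasure_one (hX : Measurable X) (hF : IsStdFrechet P X) :
    P.map X = (expMeasure 1).map fun t => t⁻¹ :=
  have := isProbabilityMeasure_expMeasure one_pos
  hF.map_eq hX measurable_inv isStdFrechet_inv_expMeasure_one

lemma integrable_rpow (hX : Measurable X) (hF : IsStdFrechet P X) {s : ℝ} (hs : s < 1) :
    Integrable (fun ω => X ω ^ s) P := by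
  have hmeas : Measurable fun x : ℝ => x ^ s := by fun_prop
  refine (integrable_map_measure hmeas.aestronglyMeasurable hX.aemeasurable).mp ?_
  rw [hF.map_eq_map_inv_expMeasure_one hX,
    integrable_map_measure hmeas.aestronglyMeasurable measurable_inv.aemeasurable]
  exact integrable_inv_rpow_expMeasure_one hs

lemma integral_rpow (hX : Measurable X) (hF : IsStdFrechet P X) {s : ℝ} (hs : s < 1) :
    ∫ ω, X ω ^ s ∂P = Gamma (1 - s) := by
  have hmeas : Measurable fun x : ℝ => x ^ s := by fun_prop
  rw [← integral_map hX.aemeasurable hmeas.aestronglyMeasurable,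
    hF.map_eq_map_inv_expMeasure_one hX,
    integral_map measurable_inv.aemeasurable hmeas.aestronglyMeasurable]
  exact integral_inv_rpow_expMeasure_one hs

lemma memLp_rpow (hX : Measurable X) (hF : IsStdFrechet P X) {s : ℝ} (hs : s < 1 / 2) :
    MemLp (fun ω => X ω ^ s) 2 P := by
  refine (memLp_two_iff_integrable_sq (hX.pow_const s).aestronglyMeasurable).mpr ?_
  refine (hF.integrable_rpow hX (s := 2 * s) (by linarith)).congr ?_
  filter_upwards [hF.ae_pos] with ω hω
  rw [← rpow_natCast, ← rpow_mul hω.le]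
  ring_nf

end Moments

lemma covariance_rpow [IsProbabilityMeasure P] (hX : Measurable X) (hF : IsStdFrechet P X)
    {s t : ℝ} (hs : s < 1 / 2) (ht : t < 1 / 2) :
    cov[fun ω => X ω ^ s, fun ω => X ω ^ t; P] =
      Gamma (1 - (s + t)) - Gamma (1 - s) * Gamma (1 - t) := by
  have hprod : (fun ω => X ω ^ s) * (fun ω => X ω ^ t) =ᵐ[P] fun ω => X ω ^ (s + t) := by
    filter_upwards [hF.ae_pos] with ω hω
    exact (rpow_add hω _ _).symm
  rw [covariance_eq_sub (hF.memLp_rpow hX hs) (hF.memLp_rpow hX ht), integral_congr_ae hprod,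
    hF.integral_rpow hX (by linarith), hF.integral_rpow hX (by linarith),
    hF.integral_rpow hX (by linarith)]

end IsStdFrechet

lemma add_mul_rpow_pow_eq_sum {x : ℝ} (hx : 0 < x) (a b ξ : ℝ) (n : ℕ) :
    (a + b * x ^ ξ) ^ n = ∑ k ∈ Finset.range (n + 1),
      (n.choose k * a ^ k * b ^ (n - k)) * x ^ (((n : ℝ) - k) * ξ) := by
  rw [add_pow]
  refine Finset.sum_congr rfl fun k hk => ?_
  rw [mul_pow, ← rpow_natCast (x ^ ξ), ← rpow_mul hx.le, mul_comm ξ,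
    Nat.cast_sub (Finset.mem_range_succ_iff.mp hk)]
  ring

theorem stmt4_general {Ω : Type*} [MeasurableSpace Ω] (P : Measure Ω) [IsProbabilityMeasure P]
    (X : Ω → ℝ) (hX : Measurable X) (hF : IsStdFrechet P X)
    (η τ ξ : ℝ)
    (β : ℕ) (hβξ : (β : ℝ) * ξ < 1 / 2) :
    ProbabilityTheory.variance (fun ω => ((η - τ / ξ) + (τ / ξ) * X ω ^ ξ) ^ β) P =
      ∑ k1 ∈ Finset.range (β + 1), ∑ k2 ∈ Finset.range (β + 1),
        ((β.choose k1 : ℝ) * (β.choose k2 : ℝ) * (η - τ / ξ) ^ (k1 + k2)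
            * (τ / ξ) ^ (2 * β - (k1 + k2)))
          * (Real.Gamma (1 - ξ * (2 * (β : ℝ) - k1 - k2))
              - Real.Gamma (1 - ((β : ℝ) - k1) * ξ) * Real.Gamma (1 - ((β : ℝ) - k2) * ξ)) := by
  set a := η - τ / ξ
  set b := τ / ξ
  have hexp : ∀ k ∈ Finset.range (β + 1), ((β : ℝ) - k) * ξ < 1 / 2 := by
    intro k hk
    have hkβ : (k : ℝ) ≤ β := by exact_mod_cast Finset.mem_range_succ_iff.mp hk
    rcases le_or_gt ξ 0 with hξ | hξ <;> nlinarith [Nat.cast_nonneg (α := ℝ) k]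
  rw [variance_congr (hF.ae_pos.mono fun ω hω => add_mul_rpow_pow_eq_sum hω a b ξ β),
    variance_fun_sum' fun k hk => (hF.memLp_rpow hX (hexp k hk)).const_mul _]
  refine Finset.sum_congr rfl fun k1 hk1 => Finset.sum_congr rfl fun k2 hk2 => ?_
  have hdeg : 2 * β - (k1 + k2) = (β - k1) + (β - k2) := by
    simp only [Finset.mem_range] at hk1 hk2
    omega
  rw [covariance_const_mul_left, covariance_const_mul_right,
    hF.covariance_rpow hX (hexp k1 hk1) (hexp k2 hk2), hdeg,
    show ((β : ℝ) - k1) * ξ + ((β : ℝ) - k2) * ξ = ξ * (2 * β - k1 - k2) by ring]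
  ring

/-- Variance of `Z^β` where `Z = (η - τ/ξ) + (τ/ξ) X^ξ` for `X` standard Fréchet,
`τ > 0`, `ξ ≠ 0` and `β` a positive integer with `βξ < 1/2`. -/
theorem stmt4 {Ω : Type*} [MeasurableSpace Ω] (P : Measure Ω) [IsProbabilityMeasure P]
    (X : Ω → ℝ) (hX : Measurable X) (hF : IsStdFrechet P X)
    (η τ ξ : ℝ) (hτ : 0 < τ) (hξ : ξ ≠ 0)
    (β : ℕ) (hβ : 0 < β) (hβξ : (β : ℝ) * ξ < 1 / 2) :
    ProbabilityTheory.variance (fun ω => ((η - τ / ξ) + (τ / ξ) * X ω ^ ξ) ^ β) P =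
      ∑ k1 ∈ Finset.range (β + 1), ∑ k2 ∈ Finset.range (β + 1),
        ((β.choose k1 : ℝ) * (β.choose k2 : ℝ) * (η - τ / ξ) ^ (k1 + k2)
            * (τ / ξ) ^ (2 * β - (k1 + k2)))
          * (Real.Gamma (1 - ξ * (2 * (β : ℝ) - k1 - k2))
              - Real.Gamma (1 - ((β : ℝ) - k1) * ξ) * Real.Gamma (1 - ((β : ℝ) - k2) * ξ)) :=
  stmt4_general P X hX hF η τ ξ β hβξ
end

section
/- Fix z1, z2 > 0 and, for h > 0, define F(h) = exp( −(1/z1) Φ(h/2 + (1/h) log(z2/z1)) − (1/z2) Φ(h/2 + (1/h) log(z1/z2)) ). Then F is differentiable on (0,∞) with F′(h) = −F(h) · (√(z2/z1) / (√(2π) z2)) · exp( −h²/8 − (log(z2/z1))²/(2h²) ). In particular F′(h) < 0 for all h > 0, so h ↦ F(h) is strictly decreasing on (0,∞). -/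
open MeasureTheory

noncomputable def nPdf (x : ℝ) : ℝ := Real.exp (-(x ^ 2) / 2) / Real.sqrt (2 * Real.pi)

/-- The standard normal cumulative distribution function `Φ`. -/
noncomputable def nCdf (x : ℝ) : ℝ := ∫ t in Set.Iic x, nPdf t

/-- The bivariate Hüsler–Reiss (Smith model) distribution function with dependence
parameter `h > 0` evaluated at `(z1, z2)`, as a function of `h`. -/
noncomputable def FHR (z1 z2 h : ℝ) : ℝ :=
  Real.exp (-(1 / z1) * nCdf (h / 2 + (1 / h) * Real.log (z2 / z1))
    - (1 / z2) * nCdf (h / 2 + (1 / h) * Real.log (z1 / z2)))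

lemma continuous_nPdf : Continuous nPdf := by
  unfold nPdf; fun_prop

lemma integrable_nPdf : Integrable nPdf := by
  have h : nPdf = fun t => Real.exp (-(1/2 : ℝ) * t ^ 2) / Real.sqrt (2 * Real.pi) := by
    funext t; unfold nPdf; ring_nf
  rw [h]
  exact (integrable_exp_neg_mul_sq (by norm_num)).div_const _

lemma hasDerivAt_nCdf (x : ℝ) : HasDerivAt nCdf (nPdf x) x := by
  have hInt := integrable_nPdf
  have key : ∀ y : ℝ, nCdf y = (∫ t in Set.Iic (0:ℝ), nPdf t) + ∫ t in (0:ℝ)..y, nPdf t := by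
    intro y
    rw [← intervalIntegral.integral_Iic_sub_Iic hInt.integrableOn hInt.integrableOn]
    unfold nCdf; ring
  have hd : HasDerivAt (fun y : ℝ => (∫ t in Set.Iic (0:ℝ), nPdf t) + ∫ t in (0:ℝ)..y, nPdf t)
      (nPdf x) x := by
    refine (intervalIntegral.integral_hasDerivAt_right hInt.intervalIntegrable
      (continuous_nPdf.aestronglyMeasurable.stronglyMeasurableAtFilter)
      continuous_nPdf.continuousAt).const_add _
  exact hd.congr_of_eventuallyEq (Filter.Eventually.of_forall fun y => (key y))

/-- For fixed `z1, z2 > 0`, the function `h ↦ F(h)` is differentiable on `(0,∞)` with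
`F'(h) = -F(h) · (√(z2/z1)/(√(2π) z2)) · exp(-h²/8 - (log(z2/z1))²/(2h²)) < 0`;
in particular it is strictly decreasing on `(0,∞)`. -/
theorem stmt6 (z1 z2 : ℝ) (hz1 : 0 < z1) (hz2 : 0 < z2) :
    (∀ h > (0 : ℝ), HasDerivAt (FHR z1 z2)
      (-(FHR z1 z2 h) * (Real.sqrt (z2 / z1) / (Real.sqrt (2 * Real.pi) * z2))
        * Real.exp (-h ^ 2 / 8 - (Real.log (z2 / z1)) ^ 2 / (2 * h ^ 2))) h) ∧
    (∀ h > (0 : ℝ), deriv (FHR z1 z2) h < 0) ∧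
    StrictAntiOn (FHR z1 z2) (Set.Ioi 0) := by
  have hz1' : z1 ≠ 0 := hz1.ne'
  have hz2' : z2 ≠ 0 := hz2.ne'
  have hS : Real.sqrt (2 * Real.pi) ≠ 0 := by positivity
  have hmain : ∀ h > (0 : ℝ), HasDerivAt (FHR z1 z2)
      (-(FHR z1 z2 h) * (Real.sqrt (z2 / z1) / (Real.sqrt (2 * Real.pi) * z2))
        * Real.exp (-h ^ 2 / 8 - (Real.log (z2 / z1)) ^ 2 / (2 * h ^ 2))) h := by
    intro h hh
    have hne : h ≠ 0 := hh.ne'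
    set L := Real.log (z2 / z1) with hL
    have hlog : Real.log (z1 / z2) = -L := by
      rw [hL, show z1 / z2 = (z2 / z1)⁻¹ by rw [inv_div], Real.log_inv]
    have hexpL : Real.exp L = z2 / z1 := Real.exp_log (div_pos hz2 hz1)
    have hsqrt : Real.sqrt (z2 / z1) = Real.exp (L / 2) := by
      rw [← hexpL]; exact (Real.exp_half L).symm
    have h5 : Real.exp (-(L/2)) * (z2 / z1) = Real.exp (L/2) := by
      rw [← hexpL, ← Real.exp_add]; congr 1; ring
    have hu : Real.exp (-(L/2)) = Real.exp (L/2) * z1 / z2 := by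
      field_simp at h5 ⊢; linear_combination h5
    have ea : nPdf (h / 2 + (1 / h) * L)
        = Real.exp (-h ^ 2 / 8 - L ^ 2 / (2 * h ^ 2)) * Real.exp (-(L/2))
          / Real.sqrt (2 * Real.pi) := by
      unfold nPdf
      rw [show -((h / 2 + (1 / h) * L) ^ 2) / 2
          = (-h ^ 2 / 8 - L ^ 2 / (2 * h ^ 2)) + (-(L/2)) by field_simp; ring,
        Real.exp_add]
    have eb : nPdf (h / 2 + (1 / h) * (-L))
        = Real.exp (-h ^ 2 / 8 - L ^ 2 / (2 * h ^ 2)) * Real.exp (L/2)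
          / Real.sqrt (2 * Real.pi) := by
      unfold nPdf
      rw [show -((h / 2 + (1 / h) * (-L)) ^ 2) / 2
          = (-h ^ 2 / 8 - L ^ 2 / (2 * h ^ 2)) + (L/2) by field_simp; ring,
        Real.exp_add]
    -- derivatives of inner arguments
    have hinv : HasDerivAt (fun x : ℝ => 1 / x) (-(1 / h ^ 2)) h := by
      simpa [one_div] using hasDerivAt_inv hne
    have ha : HasDerivAt (fun x : ℝ => x / 2 + (1 / x) * Real.log (z2 / z1))
        (1 / 2 + (-(1 / h ^ 2)) * L) h := by
      simpa using ((hasDerivAt_id h).div_const 2).fun_add (hinv.mul_const L)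
    have hb : HasDerivAt (fun x : ℝ => x / 2 + (1 / x) * Real.log (z1 / z2))
        (1 / 2 + (-(1 / h ^ 2)) * (-L)) h := by
      have := ((hasDerivAt_id h).div_const 2).fun_add (hinv.mul_const (Real.log (z1 / z2)))
      simpa [hlog] using this
    have h1 := (hasDerivAt_nCdf (h / 2 + (1 / h) * Real.log (z2 / z1))).comp h ha
    have h2 := (hasDerivAt_nCdf (h / 2 + (1 / h) * Real.log (z1 / z2))).comp h hb
    have hG := ((h1.const_mul (-(1 / z1))).sub (h2.const_mul (1 / z2))).exp
    have hFHR : FHR z1 z2 = fun x : ℝ =>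
        Real.exp (-(1 / z1) * nCdf (x / 2 + (1 / x) * Real.log (z2 / z1))
          - (1 / z2) * nCdf (x / 2 + (1 / x) * Real.log (z1 / z2))) := rfl
    have hval : -(FHR z1 z2 h) * (Real.sqrt (z2 / z1) / (Real.sqrt (2 * Real.pi) * z2))
          * Real.exp (-h ^ 2 / 8 - L ^ 2 / (2 * h ^ 2))
        = Real.exp (-(1 / z1) * nCdf (h / 2 + (1 / h) * Real.log (z2 / z1))
            - (1 / z2) * nCdf (h / 2 + (1 / h) * Real.log (z1 / z2)))
          * (-(1 / z1) * (nPdf (h / 2 + (1 / h) * Real.log (z2 / z1))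
                * (1 / 2 + (-(1 / h ^ 2)) * L))
             - 1 / z2 * (nPdf (h / 2 + (1 / h) * Real.log (z1 / z2))
                * (1 / 2 + (-(1 / h ^ 2)) * (-L)))) := by
      rw [hFHR]
      simp only [hlog, ← hL]
      rw [ea, eb, hsqrt, hu]
      field_simp
      ring
    rw [hval]
    exact hG
  refine ⟨hmain, ?_, ?_⟩
  · intro h hh
    rw [(hmain h hh).deriv]
    have hF : 0 < FHR z1 z2 h := Real.exp_pos _
    have hA : 0 < Real.sqrt (z2 / z1) / (Real.sqrt (2 * Real.pi) * z2) := by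
      apply div_pos (Real.sqrt_pos.mpr (div_pos hz2 hz1))
      positivity
    have hE : 0 < Real.exp (-h ^ 2 / 8 - (Real.log (z2 / z1)) ^ 2 / (2 * h ^ 2)) :=
      Real.exp_pos _
    nlinarith [mul_pos (mul_pos hF hA) hE]
  · apply strictAntiOn_of_deriv_neg (convex_Ioi 0)
    · exact fun x hx => ((hmain x hx).differentiableAt).continuousAt.continuousWithinAt
    · intro x hx
      rw [interior_Ioi] at hx
      rw [(hmain x hx).deriv]
      have hF : 0 < FHR z1 z2 x := Real.exp_pos _
      have hA : 0 < Real.sqrt (z2 / z1) / (Real.sqrt (2 * Real.pi) * z2) := by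
        apply div_pos (Real.sqrt_pos.mpr (div_pos hz2 hz1))
        positivity
      have hE : 0 < Real.exp (-x ^ 2 / 8 - (Real.log (z2 / z1)) ^ 2 / (2 * x ^ 2)) :=
        Real.exp_pos _
      nlinarith [mul_pos (mul_pos hF hA) hE]
end
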